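/- arXiv:1608.06819 — 3 statements merged into one kernel-verified Lean document; each statement's English description precedes it below -/
import Mathlib

section
/- Let r : [n] → ℝ₊ be positive reals with max_i r_i = r_max, and define G_k = Σ_{x ∈ S_{n,k}} Π_{j=1}^n r_j^{x_j} for k ≥ 0. Then for all m ≥ 1, r_max · G_{m-1} / G_m ≥ m/(m+n-1). -/
/-!
Double counting: `m G_m = Σ_{x ∈ S_{n,m}} Σ_i x_i r^x`, and removing one unit from coordinate `i`
is a bijection from `{x ∈ S_{n,m} | x_i ≠ 0}` onto `S_{n,m-1}` under which `r^x = r_i r^y`. Hence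
`m G_m = Σ_{y ∈ S_{n,m-1}} (Σ_i (y_i + 1) r_i) r^y ≤ r_max (m - 1 + n) G_{m-1}`.
-/

open Finset

section PiSingle

variable {ι : Type*} [DecidableEq ι]

theorem tsub_single_one_add_single_one {x : ι → ℕ} {i : ι} (hx : x i ≠ 0) :
    x - Pi.single i 1 + Pi.single i 1 = x := by
  ext j
  by_cases hj : j = i
  · subst hj
    simp only [Pi.add_apply, Pi.sub_apply, Pi.single_eq_same]
    omega
  · simp [hj]

variable [Fintype ι]

theorem sum_add_single_one (y : ι → ℕ) (i : ι) :
    ∑ j, (y + Pi.single i 1 : ι → ℕ) j = ∑ j, y j + 1 := by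
  simp [sum_add_distrib]

theorem prod_pow_add_single_one {M : Type*} [CommMonoid M] (r : ι → M) (y : ι → ℕ) (i : ι) :
    ∏ j, r j ^ (y + Pi.single i 1 : ι → ℕ) j = r i * ∏ j, r j ^ y j := by
  simp only [Pi.add_apply, pow_add, prod_mul_distrib]
  rw [mul_comm, Fintype.prod_eq_single i fun j hj => by simp [hj]]
  simp

end PiSingle

variable {R : Type*} [CommSemiring R] {n : ℕ}

def gordonNewellConst (r : Fin n → R) (k : ℕ) : R :=
  ∑ x ∈ Nat.antidiagonalTuple n k, ∏ j, r j ^ x j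

theorem sum_antidiagonalTuple_succ_coord_mul (r : Fin n → R) (i : Fin n) (k : ℕ) :
    ∑ x ∈ Nat.antidiagonalTuple n (k + 1), (x i : R) * ∏ j, r j ^ x j =
      r i * ∑ y ∈ Nat.antidiagonalTuple n k, ((y i : R) + 1) * ∏ j, r j ^ y j := by
  rw [← sum_filter_of_ne (p := fun x => x i ≠ 0) fun x _ h hx => h (by simp [hx]), mul_sum]
  refine sum_nbij' (· - Pi.single i 1) (· + Pi.single i 1) ?_ ?_ ?_ ?_ ?_
  · intro x hx
    obtain ⟨hx, hxi⟩ := mem_filter.1 hx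
    rw [Nat.mem_antidiagonalTuple, ← tsub_single_one_add_single_one hxi, sum_add_single_one] at hx
    simpa [Nat.mem_antidiagonalTuple] using hx
  · intro y hy
    rw [mem_filter, Nat.mem_antidiagonalTuple, sum_add_single_one, Nat.mem_antidiagonalTuple.1 hy]
    simp
  · intro x hx
    exact tsub_single_one_add_single_one (mem_filter.1 hx).2
  · intro y _
    exact add_tsub_cancel_right y _
  · intro x hx
    conv_lhs => rw [← tsub_single_one_add_single_one (mem_filter.1 hx).2]
    rw [prod_pow_add_single_one, Pi.add_apply, Pi.single_eq_same, Nat.cast_add_one, mul_left_comm]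

theorem succ_mul_gordonNewellConst_succ (r : Fin n → R) (k : ℕ) :
    ((k : R) + 1) * gordonNewellConst r (k + 1) =
      ∑ y ∈ Nat.antidiagonalTuple n k, (∑ i, ((y i : R) + 1) * r i) * ∏ j, r j ^ y j := by
  calc ((k : R) + 1) * gordonNewellConst r (k + 1)
      = ∑ x ∈ Nat.antidiagonalTuple n (k + 1), ∑ i, (x i : R) * ∏ j, r j ^ x j := by
        rw [gordonNewellConst, mul_sum]
        refine sum_congr rfl fun x hx => ?_
        rw [← sum_mul, ← Nat.cast_sum, Nat.mem_antidiagonalTuple.1 hx, Nat.cast_add_one]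
    _ = ∑ i, r i * ∑ y ∈ Nat.antidiagonalTuple n k, ((y i : R) + 1) * ∏ j, r j ^ y j := by
        rw [sum_comm]
        simp_rw [sum_antidiagonalTuple_succ_coord_mul]
    _ = _ := by
        simp_rw [mul_sum, sum_mul]
        rw [sum_comm]
        exact sum_congr rfl fun y _ => sum_congr rfl fun i _ => by ring

theorem succ_mul_gordonNewellConst_succ_le [PartialOrder R] [IsOrderedRing R] {r : Fin n → R}
    {M : R} (hr : ∀ i, 0 ≤ r i) (hM : ∀ i, r i ≤ M) (k : ℕ) :
    ((k : R) + 1) * gordonNewellConst r (k + 1) ≤ M * ((k : R) + n) * gordonNewellConst r k := by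
  rw [succ_mul_gordonNewellConst_succ, gordonNewellConst, mul_sum]
  refine sum_le_sum fun y hy =>
    mul_le_mul_of_nonneg_right ?_ (prod_nonneg fun j _ => pow_nonneg (hr j) _)
  calc ∑ i, ((y i : R) + 1) * r i ≤ ∑ i, ((y i : R) + 1) * M :=
        sum_le_sum fun i _ =>
          mul_le_mul_of_nonneg_left (hM i) (add_nonneg (Nat.cast_nonneg _) zero_le_one)
    _ = M * ((k : R) + n) := by
        rw [← sum_mul, sum_add_distrib, ← Nat.cast_sum, Nat.mem_antidiagonalTuple.1 hy]
        simp [mul_comm]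

theorem gordonNewellConst_pos [PartialOrder R] [IsStrictOrderedRing R] [NeZero n]
    {r : Fin n → R} (hr : ∀ i, 0 < r i) (k : ℕ) : 0 < gordonNewellConst r k :=
  sum_pos (fun x _ => prod_pos fun j _ => pow_pos (hr j) _)
    ⟨Pi.single 0 k, by simp [Nat.mem_antidiagonalTuple]⟩

/-- Gordon-Newell ratio bound: with positive weights `r_1, …, r_n` and normalization
constants `G_k = Σ_{x ∈ S_{n,k}} Π_j r_j^{x_j}`, we have
`r_max · G_{m-1} / G_m ≥ m / (m + n - 1)` for all `m ≥ 1`. -/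
theorem gordon_newell_ratio_bound (n m : ℕ) (hn : 1 ≤ n) (hm : 1 ≤ m)
    (r : Fin n → ℝ) (hr : ∀ i, 0 < r i) :
    (Finset.univ.sup' ⟨⟨0, hn⟩, Finset.mem_univ _⟩ r) *
        (∑ x ∈ Finset.Nat.antidiagonalTuple n (m - 1), ∏ j, r j ^ x j) /
        (∑ x ∈ Finset.Nat.antidiagonalTuple n m, ∏ j, r j ^ x j)
      ≥ (m : ℝ) / ((m : ℝ) + n - 1) := by
  obtain ⟨k, rfl⟩ : ∃ k, m = k + 1 := ⟨m - 1, by omega⟩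
  have : NeZero n := ⟨by omega⟩
  set M := Finset.univ.sup' ⟨⟨0, hn⟩, Finset.mem_univ _⟩ r
  have hM : ∀ i, r i ≤ M := fun i => le_sup' r (mem_univ i)
  have key := succ_mul_gordonNewellConst_succ_le (fun i => (hr i).le) hM k
  have hn' : (1 : ℝ) ≤ n := by exact_mod_cast hn
  change M * gordonNewellConst r (k + 1 - 1) / gordonNewellConst r (k + 1) ≥ _
  rw [Nat.add_sub_cancel, Nat.cast_add_one, add_sub_right_comm, add_sub_cancel_right, ge_iff_le,
    div_le_div_iff₀ (by linarith) (gordonNewellConst_pos hr _)]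
  linear_combination key
end

section
/- Let A : [n] → (0,1] and suppose the demand circulation property Σ_j φ_{ji} q_{ji} = Σ_j φ_{ij} q_{ij} for all i, and the supply circulation property Σ_j A_j φ_{ji} q_{ji} = A_i Σ_j φ_{ij} q_{ij} for all i, hold, where φ_{ij} q_{ij} ≥ 0 and the directed graph with edges {(i,j) : φ_{ij} q_{ij} > 0} is strongly connected. Then A_i = A_j for all i, j. -/
/-!
At a node `b` where `A` is minimal, supply circulation minus `A b` times demand circulation
gives `∑ k, (A k - A b) * φq k b = 0`, a sum of nonnegative terms; hence every node with an
edge into `b` is minimal as well. Strong connectivity carries minimality back to every node.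
-/

open Finset

theorem Relation.ReflTransGen.of_head_closed {α : Type*} {r : α → α → Prop} {P : α → Prop}
    {a b : α} (hP : ∀ x y, r x y → P y → P x) (h : Relation.ReflTransGen r a b) (hb : P b) :
    P a := by
  induction h using Relation.ReflTransGen.head_induction_on with
  | refl => exact hb
  | head hxy _ ih => exact hP _ _ hxy ih

theorem Finset.eq_of_sum_mul_eq_mul_sum_of_le {ι R : Type*} [CommRing R] [LinearOrder R]
    [IsStrictOrderedRing R] (s : Finset ι) {f w : ι → R} {c : R}
    (hw : ∀ k ∈ s, 0 ≤ w k) (hc : ∀ k ∈ s, c ≤ f k)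
    (h : ∑ k ∈ s, f k * w k = c * ∑ k ∈ s, w k) {a : ι} (ha : a ∈ s) (hwa : 0 < w a) :
    f a = c := by
  have hsum : ∑ k ∈ s, (f k - c) * w k = 0 := by
    simp only [sub_mul, sum_sub_distrib, ← mul_sum, h, sub_self]
  have hterm : ∀ k ∈ s, 0 ≤ (f k - c) * w k := fun k hk =>
    mul_nonneg (sub_nonneg.2 (hc k hk)) (hw k hk)
  have hzero := (sum_eq_zero_iff_of_nonneg hterm).1 hsum a ha
  exact sub_eq_zero.1 ((mul_eq_zero_iff_right hwa.ne').1 hzero)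

theorem equal_availabilities_general (n : ℕ) (A : Fin n → ℝ)
    (φq : Fin n → Fin n → ℝ) (hφq : ∀ i j, 0 ≤ φq i j)
    (hdemand : ∀ i : Fin n, ∑ j, φq j i = ∑ j, φq i j)
    (hsupply : ∀ i : Fin n, ∑ j, A j * φq j i = A i * ∑ j, φq i j)
    (hconn : ∀ i j : Fin n, Relation.ReflTransGen (fun a b => 0 < φq a b) i j) :
    ∀ i j, A i = A j := by
  intro i j
  obtain ⟨m, -, hm⟩ := exists_min_image univ A ⟨i, mem_univ i⟩
  have hclosed : ∀ a b, 0 < φq a b → A b = A m → A a = A m := by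
    intro a b hab hb
    have hbalance : ∑ k, A k * φq k b = A m * ∑ k, φq k b := by
      rw [hsupply b, hdemand b, hb]
    exact univ.eq_of_sum_mul_eq_mul_sum_of_le (fun k _ => hφq k b) (fun k _ => hm k (mem_univ k))
      hbalance (mem_univ a) hab
  have hmin : ∀ a, A a = A m := fun a =>
    (hconn a m).of_head_closed (P := fun x => A x = A m) hclosed rfl
  rw [hmin i, hmin j]

/-- If availabilities `A_i ∈ (0,1]` satisfy both demand circulation and supply
circulation with respect to nonnegative effective demand rates `φq`, and the support
graph of `φq` is strongly connected, then all availabilities are equal. -/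
theorem equal_availabilities (n : ℕ) (A : Fin n → ℝ)
    (hA : ∀ i, A i ∈ Set.Ioc (0 : ℝ) 1)
    (φq : Fin n → Fin n → ℝ) (hφq : ∀ i j, 0 ≤ φq i j)
    (hdemand : ∀ i : Fin n, ∑ j, φq j i = ∑ j, φq i j)
    (hsupply : ∀ i : Fin n, ∑ j, A j * φq j i = A i * ∑ j, φq i j)
    (hconn : ∀ i j : Fin n, Relation.ReflTransGen (fun a b => 0 < φq a b) i j) :
    ∀ i j, A i = A j :=
  equal_availabilities_general n A φq hφq hdemand hsupply hconn
end

section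
/- In the three-node cycle network of Figure 1 with one unit (m=1), where from state B the unit goes to C with rate q and to A with rate 1, from A to B with rate 1, and from C to B with rate ε > 0, the throughput as a function of the quantile q_{BC} on edge (B,C) is not concave: at q_{BC} = 1 the throughput is 2·2ε/(1+2ε), at q_{BC} = ε it is 2(1+ε)/3, and at the midpoint q_{BC} = (1+ε)/2 it is 2ε(3+ε)/(5ε+1), and for sufficiently small ε the midpoint value is strictly less than the average of the endpoint values. -/
/-- Long-run throughput of the one-unit, three-node cycle network, as a function of the
travel rate `ε` on edge `(C,B)` and the quantile `q` on edge `(B,C)`: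
throughput = `2 / (expected return time to B)`, where the expected return time to `B`
is `1/(1+q) + (1/(1+q))·1 + (q/(1+q))·(1/ε)`. -/
noncomputable def throughput (ε q : ℝ) : ℝ :=
  2 / (1 / (1 + q) + (1 / (1 + q)) * 1 + (q / (1 + q)) * (1 / ε))

/-- In the three-node cycle network with one unit, the throughput as a function of the
quantile `q_{BC}` is not concave: its values at `q = 1`, `q = ε`, and at the midpoint
`q = (1+ε)/2` are `4ε/(1+2ε)`, `2(1+ε)/3`, and `2ε(3+ε)/(5ε+1)` respectively, and for
all sufficiently small `ε > 0` the midpoint value is strictly below the average of the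
endpoint values. -/
theorem throughput_not_concave :
    ∃ ε₀ > (0 : ℝ), ∀ ε : ℝ, 0 < ε → ε < ε₀ →
      throughput ε 1 = 2 * (2 * ε) / (1 + 2 * ε) ∧
      throughput ε ε = 2 * (1 + ε) / 3 ∧
      throughput ε ((1 + ε) / 2) = 2 * ε * (3 + ε) / (5 * ε + 1) ∧
      throughput ε ((1 + ε) / 2) < (throughput ε 1 + throughput ε ε) / 2 := by
  refine ⟨1/10, by norm_num, fun ε hε hε' => ?_⟩
  have hne : ε ≠ 0 := ne_of_gt hε
  have h1 : throughput ε 1 = 2 * (2 * ε) / (1 + 2 * ε) := by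
    unfold throughput
    rw [div_eq_div_iff] <;> [skip; skip; positivity]
    · field_simp
      ring
    · have : 0 < 1 / (1 + (1:ℝ)) + 1 / (1 + 1) * 1 + 1 / (1 + 1) * (1 / ε) := by positivity
      linarith
  have h2 : throughput ε ε = 2 * (1 + ε) / 3 := by
    unfold throughput
    rw [div_eq_div_iff] <;> [skip; skip; norm_num]
    · field_simp
      ring
    · have : 0 < 1 / (1 + ε) + 1 / (1 + ε) * 1 + ε / (1 + ε) * (1 / ε) := by positivity
      linarith
  have h3 : throughput ε ((1 + ε) / 2) = 2 * ε * (3 + ε) / (5 * ε + 1) := by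
    unfold throughput
    rw [div_eq_div_iff] <;> [skip; skip; positivity]
    · field_simp
      ring
    · have : 0 < 1 / (1 + (1 + ε) / 2) + 1 / (1 + (1 + ε) / 2) * 1 +
        (1 + ε) / 2 / (1 + (1 + ε) / 2) * (1 / ε) := by positivity
      linarith
  refine ⟨h1, h2, h3, ?_⟩
  rw [h1, h2, h3]
  rw [div_lt_div_iff₀ (by positivity) (by norm_num)]
  rw [div_add_div _ _ (by positivity : (1:ℝ) + 2*ε ≠ 0) (by norm_num : (3:ℝ) ≠ 0)]
  rw [div_mul_eq_mul_div, lt_div_iff₀ (by positivity)]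
  nlinarith [sq_nonneg ε, sq_nonneg (ε - 1), mul_pos hε hε]
end
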